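/- arXiv:1208.2585 — 2 statements merged into one kernel-verified Lean document; each statement's English description precedes it below -/
import Mathlib

section
/- Under the Abstract State postulate, if an algorithm computes a partial function f : Dᵏ ⇀ D and ζ is an automorphism of every input state fixing the interpretations of all static symbols, then f commutes with ζ: f(ζ(ā)) = ζ(f(ā)) whenever f(ā) is defined. -/
/-- Ground terms over a vocabulary: a type `F` of function symbols with arities `ar`. -/
inductive Term (F : Type) (ar : F → ℕ) : Type
  | app (f : F) (args : Fin (ar f) → Term F ar) : Term F ar

/-- A (first-order) structure over the vocabulary `(F, ar)` with carrier `D`. -/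
structure Struc (F : Type) (ar : F → ℕ) (D : Type) where
  interp : (f : F) → (Fin (ar f) → D) → D

/-- Evaluation of a ground term in a structure. -/
def eval {F : Type} {ar : F → ℕ} {D : Type} (X : Struc F ar D) : Term F ar → D
  | .app f args => X.interp f fun i => eval X (args i)

/-- `ζ : X ≅ Y`: a bijection of the carrier commuting with all interpretations. -/
def IsIso {F : Type} {ar : F → ℕ} {D : Type} (ζ : D ≃ D)
    (X Y : Struc F ar D) : Prop :=
  ∀ (f : F) (args : Fin (ar f) → D),
    ζ (X.interp f args) = Y.interp f fun i => ζ (args i)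

/-- Iterating a partial transition function. -/
def iterO {S : Type} (τ : S → Option S) : ℕ → S → Option S
  | 0, X => some X
  | k + 1, X => (iterO τ k X).bind τ

/-- The run from `X` reaches the terminal state `Y` after `m` steps. -/
def terminalAt {S : Type} (τ : S → Option S) (X : S) (m : ℕ) (Y : S) : Prop :=
  iterO τ m X = some Y ∧ τ Y = none

/-- The algorithm `τ` computes the partial function `f : Dᵏ ⇀ D` via input states
`input ā` and designated output term `t`: from `input ā` the run terminates with
`⟦t⟧ = f ā` when `f ā` is defined, and diverges otherwise. -/
def Computes {F : Type} {ar : F → ℕ} {D : Type} {k : ℕ}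
    (τ : Struc F ar D → Option (Struc F ar D))
    (input : (Fin k → D) → Struc F ar D) (t : Term F ar)
    (f : (Fin k → D) → Option D) : Prop :=
  ∀ a : Fin k → D,
    (∃ m Y, terminalAt τ (input a) m Y ∧ f a = some (eval Y t)) ∨
    (f a = none ∧ ∀ m Y, ¬ terminalAt τ (input a) m Y)

/-!
By the Abstract State postulate, `IsIso ζ` is a simulation relation for the transition
function: related states are terminal together and otherwise step to related states. Hence
`ζ` carries the run from `input ā` onto the run from `input (ζ ā)`, which therefore
terminates after the same number of steps in a state isomorphic to the final one. Ground
terms are evaluated equivariantly, so the output there is `ζ (f ā)`, and since runs are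
deterministic this is `f (ζ ā)`.
-/

theorem Option.rel_some_left {α β : Type*} {r : α → β → Prop} {a : α} {y : Option β} :
    Option.Rel r (some a) y ↔ ∃ b, y = some b ∧ r a b := by
  cases y <;> simp

theorem Option.rel_none_left {α β : Type*} {r : α → β → Prop} {y : Option β} :
    Option.Rel r none y ↔ y = none := by
  cases y <;> simp

section Runs

variable {S : Type} {τ : S → Option S}

theorem iterO_add (m n : ℕ) (X : S) :
    iterO τ (m + n) X = (iterO τ m X).bind (iterO τ n) := by
  induction n with
  | zero => rw [Nat.add_zero]; cases iterO τ m X <;> rfl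
  | succ n ih =>
    show (iterO τ (m + n) X).bind τ = _
    rw [ih, Option.bind_assoc]
    rfl

theorem iterO_succ_eq_none_of_eq_none {Y : S} (hY : τ Y = none) (n : ℕ) :
    iterO τ (n + 1) Y = none := by
  induction n with
  | zero => exact hY
  | succ n ih => rw [iterO, ih]; rfl

theorem terminalAt.unique {X Y Y' : S} {m m' : ℕ} (h : terminalAt τ X m Y)
    (h' : terminalAt τ X m' Y') : Y = Y' := by
  wlog hle : m ≤ m' generalizing m m' Y Y'
  · exact (this h' h (le_of_not_ge hle)).symm
  obtain ⟨n, rfl⟩ := Nat.exists_eq_add_of_le hle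
  have hrun : iterO τ n Y = some Y' := by simpa [iterO_add, h.1] using h'.1
  cases n with
  | zero => exact Option.some.inj hrun
  | succ n => simp [iterO_succ_eq_none_of_eq_none h.2] at hrun

variable {R : S → S → Prop} (hτ : ∀ X Y, R X Y → Option.Rel R (τ X) (τ Y))
include hτ

theorem iterO_rel {X Y : S} (hXY : R X Y) (m : ℕ) :
    Option.Rel R (iterO τ m X) (iterO τ m Y) := by
  induction m with
  | zero => exact .some hXY
  | succ m ih =>
    simp only [iterO]
    generalize iterO τ m X = x, iterO τ m Y = y at ih
    cases ih with
    | none => exact .none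
    | some hR => exact hτ _ _ hR

theorem terminalAt.exists_rel {X Y X' : S} {m : ℕ} (h : terminalAt τ X m X') (hXY : R X Y) :
    ∃ Y', terminalAt τ Y m Y' ∧ R X' Y' := by
  have hrun := iterO_rel hτ hXY m
  rw [h.1] at hrun
  obtain ⟨Y', hY', hR⟩ := Option.rel_some_left.mp hrun
  have hstep := hτ _ _ hR
  rw [h.2] at hstep
  exact ⟨Y', ⟨hY', Option.rel_none_left.mp hstep⟩, hR⟩

end Runs

section Structures

variable {F : Type} {ar : F → ℕ} {D : Type} {ζ : D ≃ D}

theorem IsIso.apply_eval {X Y : Struc F ar D} (h : IsIso ζ X Y) (t : Term F ar) :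
    ζ (eval X t) = eval Y t := by
  induction t with
  | app f args ih => simp only [eval, h f, ih]

theorem optionRel_isIso_step {τ : Struc F ar D → Option (Struc F ar D)}
    (h1 : ∀ (X Y : Struc F ar D) (ζ : D ≃ D), IsIso ζ X Y → (τ X = none ↔ τ Y = none))
    (h2 : ∀ (X Y X' Y' : Struc F ar D) (ζ : D ≃ D), IsIso ζ X Y →
      τ X = some X' → τ Y = some Y' → IsIso ζ X' Y')
    {X Y : Struc F ar D} (h : IsIso ζ X Y) : Option.Rel (IsIso ζ) (τ X) (τ Y) := by
  cases hX : τ X with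
  | none => rw [(h1 X Y ζ h).mp hX]; exact .none
  | some X' =>
    cases hY : τ Y with
    | none => simp [(h1 X Y ζ h).mpr hY] at hX
    | some Y' => exact .some (h2 X Y X' Y' ζ h hX hY)

end Structures

namespace Computes

variable {F : Type} {ar : F → ℕ} {D : Type} {k : ℕ} {τ : Struc F ar D → Option (Struc F ar D)}
  {input : (Fin k → D) → Struc F ar D} {t : Term F ar} {f : (Fin k → D) → Option D}

theorem eq_some_of_terminalAt (hc : Computes τ input t f) {a : Fin k → D} {m : ℕ}
    {Y : Struc F ar D} (h : terminalAt τ (input a) m Y) : f a = some (eval Y t) := by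
  rcases hc a with ⟨m', Y', h', hf⟩ | ⟨-, hdiv⟩
  · rw [hf, h'.unique h]
  · exact absurd h (hdiv m Y)

theorem exists_terminalAt_of_eq_some (hc : Computes τ input t f) {a : Fin k → D} {d : D}
    (hd : f a = some d) : ∃ m Y, terminalAt τ (input a) m Y ∧ d = eval Y t := by
  rcases hc a with ⟨m, Y, h, hf⟩ | ⟨hf, -⟩
  · exact ⟨m, Y, h, Option.some.inj (hd.symm.trans hf)⟩
  · simp [hf] at hd

end Computes

/-- under the Abstract State postulate, if an algorithm computes a partial
function `f : Dᵏ ⇀ D` and `ζ` is an automorphism carrying each input state for `ā` to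
the input state for `ζ(ā)`, then `f` commutes with `ζ`: `f(ζ(ā)) = ζ(f(ā))` whenever
`f(ā)` is defined. -/
theorem computed_function_commutes_with_automorphism {F : Type} {ar : F → ℕ}
    {D : Type} {k : ℕ}
    (τ : Struc F ar D → Option (Struc F ar D))
    (h1 : ∀ (X Y : Struc F ar D) (ζ : D ≃ D), IsIso ζ X Y → (τ X = none ↔ τ Y = none))
    (h2 : ∀ (X Y X' Y' : Struc F ar D) (ζ : D ≃ D), IsIso ζ X Y →
      τ X = some X' → τ Y = some Y' → IsIso ζ X' Y')
    (input : (Fin k → D) → Struc F ar D) (t : Term F ar)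
    (f : (Fin k → D) → Option D) (hc : Computes τ input t f)
    (ζ : D ≃ D) (hζ : ∀ a : Fin k → D, IsIso ζ (input a) (input fun x => ζ (a x))) :
    ∀ (a : Fin k → D) (d : D), f a = some d → f (fun x => ζ (a x)) = some (ζ d) := by
  intro a d hd
  obtain ⟨m, Y, hY, rfl⟩ := hc.exists_terminalAt_of_eq_some hd
  obtain ⟨Y', hY', hiso⟩ :=
    hY.exists_rel (fun _ _ => optionRel_isIso_step h1 h2) (hζ a)
  rw [hc.eq_some_of_terminalAt hY', hiso.apply_eval]
end

section
/- Δ⁺ is compositional and monotone for parallel composition: Δ⁺ of do {P₁ … Pₙ} in any state X equals the union of the Δ⁺_{Pᵢ}(X), and consequently if each Δ⁺_{Pᵢ}(X) is clash-free and the Pᵢ update pairwise disjoint sets of locations in X, then the combined update set is clash-free and the resulting next state agrees with the next state of each Pᵢ on the locations that Pᵢ updates. -/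
/-- Propositional combinations of equalities between ground terms. -/
inductive Cond (F : Type) (ar : F → ℕ) : Type
  | eq (s t : Term F ar)
  | not (c : Cond F ar)
  | and (c d : Cond F ar)
  | or (c d : Cond F ar)

/-- Truth of a condition in a structure. -/
def condHolds {F : Type} {ar : F → ℕ} {D : Type} (X : Struc F ar D) : Cond F ar → Prop
  | .eq s t => eval X s = eval X t
  | .not c => ¬ condHolds X c
  | .and c d => condHolds X c ∧ condHolds X d
  | .or c d => condHolds X c ∨ condHolds X d

/-- ASM programs: assignments `f(s₁,…,sₙ) := t`, conditionals, and parallel composition. -/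
inductive Prog (F : Type) (ar : F → ℕ) : Type
  | skip
  | assign (f : F) (args : Fin (ar f) → Term F ar) (rhs : Term F ar)
  | cond (c : Cond F ar) (thn els : Prog F ar)
  | par (ps : List (Prog F ar))

/-- A location `f(ā)` in a structure with carrier `D`. -/
def Loc (F : Type) (ar : F → ℕ) (D : Type) : Type := Σ f : F, Fin (ar f) → D

open Classical in
/-- The proposed update set Δ⁺_P(X): a singleton for an assignment, the update set of
the selected branch for a conditional, and the union for parallel composition. -/
noncomputable def deltaPlus {F : Type} {ar : F → ℕ} {D : Type} :
    Prog F ar → Struc F ar D → Set (Loc F ar D × D)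
  | .skip, _ => ∅
  | .assign f args rhs, X => {(⟨f, fun i => eval X (args i)⟩, eval X rhs)}
  | .cond c p q, X => if condHolds X c then deltaPlus p X else deltaPlus q X
  | .par ps, X => ⋃ p ∈ ps, deltaPlus p X

/-- An update set is clash-free if no two of its updates share a location but differ in value. -/
def clashFree {F : Type} {ar : F → ℕ} {D : Type} (Δ : Set (Loc F ar D × D)) : Prop :=
  ∀ (l : Loc F ar D) (b b' : D), (l, b) ∈ Δ → (l, b') ∈ Δ → b = b'

/-- The graph of a structure, viewed as the set of its location–value points `f(ā) ↦ b`. -/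
def graph {F : Type} {ar : F → ℕ} {D : Type} (X : Struc F ar D) : Set (Loc F ar D × D) :=
  {p | X.interp p.1.1 p.1.2 = p.2}

/-- The (non-trivial) update set Δ_P(X) = Δ⁺_P(X) \ X. -/
noncomputable def Delta {F : Type} {ar : F → ℕ} {D : Type}
    (P : Prog F ar) (X : Struc F ar D) : Set (Loc F ar D × D) :=
  deltaPlus P X \ graph X

open Classical in
/-- Applying an update set to a structure: updated locations get their new value,
all other locations keep their old value. -/
noncomputable def applyUpd {F : Type} {ar : F → ℕ} {D : Type}
    (Δ : Set (Loc F ar D × D)) (X : Struc F ar D) : Struc F ar D :=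
  ⟨fun f args => if h : ∃ b, (⟨f, args⟩, b) ∈ Δ then h.choose else X.interp f args⟩

/-- The next state τ_P(X), obtained by applying the non-trivial updates Δ_P(X) to `X`. -/
noncomputable def tau {F : Type} {ar : F → ℕ} {D : Type}
    (P : Prog F ar) (X : Struc F ar D) : Struc F ar D :=
  applyUpd (Delta P X) X

/-- The set of locations updated by an update set. -/
def locs {F : Type} {ar : F → ℕ} {D : Type} (Δ : Set (Loc F ar D × D)) : Set (Loc F ar D) :=
  {l | ∃ b, (l, b) ∈ Δ}

/-!
Under Δ⁺, parallel composition is just the union of the components' update sets. If the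
components update pairwise disjoint sets of locations, then at a location `l` updated by `Pᵢ`
the union proposes exactly the values that `Pᵢ` proposes. So clashes can only occur inside one
component, and applying the union has the same effect at `l` as applying `Δ⁺_{Pᵢ}(X)`.
-/

theorem List.Pairwise.pairwiseDisjoint {ι α : Type*} [PartialOrder α] [OrderBot α]
    {l : List ι} {f : ι → α} (h : l.Pairwise fun i j => _root_.Disjoint (f i) (f j)) :
    {i | i ∈ l}.PairwiseDisjoint f :=
  haveI : Std.Symm fun i j => _root_.Disjoint (f i) (f j) := ⟨fun _ _ h => h.symm⟩
  h.set_pairwise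

section UpdateSets

variable {F : Type} {ar : F → ℕ} {D : Type}

theorem mem_biUnion_iff_of_mem_locs {ι : Type*} {s : Set ι} {Δ : ι → Set (Loc F ar D × D)}
    (hdisj : s.PairwiseDisjoint fun i => locs (Δ i)) {i : ι} (hi : i ∈ s)
    {l : Loc F ar D} (hl : l ∈ locs (Δ i)) (c : D) :
    (l, c) ∈ ⋃ j ∈ s, Δ j ↔ (l, c) ∈ Δ i := by
  refine ⟨fun hc => ?_, fun hc => Set.mem_biUnion hi hc⟩
  obtain ⟨j, hj, hcj⟩ := Set.mem_iUnion₂.1 hc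
  obtain rfl : i = j := hdisj.elim hi hj (Set.not_disjoint_iff.2 ⟨l, hl, c, hcj⟩)
  exact hcj

theorem clashFree_biUnion {ι : Type*} {s : Set ι} {Δ : ι → Set (Loc F ar D × D)}
    (hcf : ∀ i ∈ s, clashFree (Δ i)) (hdisj : s.PairwiseDisjoint fun i => locs (Δ i)) :
    clashFree (⋃ i ∈ s, Δ i) := by
  intro l b b' hb hb'
  obtain ⟨i, hi, hbi⟩ := Set.mem_iUnion₂.1 hb
  exact hcf i hi l b b' hbi ((mem_biUnion_iff_of_mem_locs hdisj hi ⟨b, hbi⟩ b').1 hb')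

theorem deltaPlus_par_eq (ps : List (Prog F ar)) (X : Struc F ar D) :
    deltaPlus (Prog.par ps) X = ⋃ p ∈ ps, deltaPlus p X := by
  rw [deltaPlus]

theorem applyUpd_interp_congr {Δ Δ' : Set (Loc F ar D × D)} (X : Struc F ar D) {f : F}
    {a : Fin (ar f) → D} (h : ∀ c, (⟨f, a⟩, c) ∈ Δ ↔ (⟨f, a⟩, c) ∈ Δ') :
    (applyUpd Δ X).interp f a = (applyUpd Δ' X).interp f a := by
  -- Equal fibres at `⟨f, a⟩` make the two `Exists.choose` terms literally the same.
  have hfiber : (fun c => (⟨f, a⟩, c) ∈ Δ) = fun c => (⟨f, a⟩, c) ∈ Δ' :=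
    funext fun c => propext (h c)
  simp only [applyUpd]
  rw [hfiber]

theorem tau_interp_congr {P Q : Prog F ar} (X : Struc F ar D) {f : F} {a : Fin (ar f) → D}
    (h : ∀ c, (⟨f, a⟩, c) ∈ deltaPlus P X ↔ (⟨f, a⟩, c) ∈ deltaPlus Q X) :
    (tau P X).interp f a = (tau Q X).interp f a :=
  applyUpd_interp_congr X fun c => and_congr_left' (h c)

end UpdateSets

/-- Δ⁺ is compositional for parallel composition: Δ⁺ of `do {P₁ … Pₙ}`
in any state equals the union of the Δ⁺_{Pᵢ}; consequently, if each Δ⁺_{Pᵢ}(X) is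
clash-free and the `Pᵢ` update pairwise disjoint sets of locations, then the combined
update set is clash-free and the next state of the parallel composition agrees with
the next state of each `Pᵢ` on the locations that `Pᵢ` updates. -/
theorem deltaPlus_par {F : Type} {ar : F → ℕ} {D : Type}
    (ps : List (Prog F ar)) (X : Struc F ar D) :
    deltaPlus (Prog.par ps) X = (⋃ p ∈ ps, deltaPlus p X) ∧
    ((∀ p ∈ ps, clashFree (deltaPlus p X)) →
      ps.Pairwise (fun p q => Disjoint (locs (deltaPlus p X)) (locs (deltaPlus q X))) →
      clashFree (deltaPlus (Prog.par ps) X) ∧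
      ∀ p ∈ ps, ∀ (f : F) (a : Fin (ar f) → D),
        (⟨f, a⟩ : Loc F ar D) ∈ locs (deltaPlus p X) →
        (tau (Prog.par ps) X).interp f a = (tau p X).interp f a) := by
  refine ⟨deltaPlus_par_eq ps X, fun hcf hdisj => ⟨?_, fun p hp f a hl => ?_⟩⟩
  · rw [deltaPlus_par_eq]
    exact clashFree_biUnion hcf hdisj.pairwiseDisjoint
  · refine tau_interp_congr X fun c => ?_
    rw [deltaPlus_par_eq]
    exact mem_biUnion_iff_of_mem_locs hdisj.pairwiseDisjoint hp hl c
end
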